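/- arXiv:2308.04531 — 2 statements merged into one kernel-verified Lean document; each statement's English description precedes it below -/
import Mathlib

section
/- Suppose (𝒱, ⊗, I) = (𝒱, ×, 1) and 𝒱 is cartesian closed. Let 𝒯 = (Σ, ℰ) be a 𝒱-enriched 𝒮-sorted equational theory, let X be an object of 𝒱^𝒮, and let ∼^ℰ be the Σ-congruence on the free Σ-algebra F^Σ X generated by ℰ. Then the quotient Σ-algebra F^Σ X/∼^ℰ, together with the unit X → U^𝒯(F^Σ X/∼^ℰ) given by composing the unit of F^Σ ⊣ U^Σ with the quotient morphism, is the free 𝒯-algebra on X: for every 𝒯-algebra A and every 𝒱^𝒮-morphism f : X → U^𝒯 A there is a unique Σ-algebra morphism f^♯ : F^Σ X/∼^ℰ → A with f^♯ ∘ η = f. -/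
universe u

/-- A topological construct over `Set`: an amnestic concrete category over types,
presented by a class of structures on each type together with an admissibility
predicate on functions, in which every structured source has an initial lift and
every structured sink has a final lift (index types in `Type (u+1)` suffice for
all the "large" sources/sinks we consider). -/
structure TopConstruct : Type (u + 2) where
  Str : Type u → Type (u + 1)
  Adm : ∀ {X Y : Type u}, Str X → Str Y → (X → Y) → Prop
  adm_id : ∀ {X : Type u} (s : Str X), Adm s s id
  adm_comp : ∀ {X Y Z : Type u} {s : Str X} {t : Str Y} {r : Str Z} {f : X → Y} {g : Y → Z},
    Adm s t f → Adm t r g → Adm s r (g ∘ f)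
  amnestic : ∀ {X : Type u} (s t : Str X), Adm s t id → Adm t s id → s = t
  iLift : ∀ {X : Type u} {I : Type (u + 1)} (T : I → Type u) (t : ∀ i, Str (T i))
    (f : ∀ i, X → T i), Str X
  iLift_adm : ∀ {X : Type u} {I : Type (u + 1)} (T : I → Type u) (t : ∀ i, Str (T i))
    (f : ∀ i, X → T i) (i : I), Adm (iLift T t f) (t i) (f i)
  iLift_initial : ∀ {X : Type u} {I : Type (u + 1)} (T : I → Type u) (t : ∀ i, Str (T i))
    (f : ∀ i, X → T i) {W : Type u} (w : Str W) (g : W → X),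
    (∀ i, Adm w (t i) (fun x => f i (g x))) → Adm w (iLift T t f) g
  fLift : ∀ {X : Type u} {I : Type (u + 1)} (T : I → Type u) (t : ∀ i, Str (T i))
    (f : ∀ i, T i → X), Str X
  fLift_adm : ∀ {X : Type u} {I : Type (u + 1)} (T : I → Type u) (t : ∀ i, Str (T i))
    (f : ∀ i, T i → X) (i : I), Adm (t i) (fLift T t f) (f i)
  fLift_final : ∀ {X : Type u} {I : Type (u + 1)} (T : I → Type u) (t : ∀ i, Str (T i))
    (f : ∀ i, T i → X) {W : Type u} (w : Str W) (g : X → W),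
    (∀ i, Adm (t i) w (fun x => g (f i x))) → Adm (fLift T t f) w g

namespace TopConstruct

variable (V : TopConstruct.{u})

/-- The objects of the topological category `V`. -/
def Obj : Type (u + 1) := Σ X : Type u, V.Str X

/-- The fibre (partial) order over a fixed underlying set. -/
def fibLe {X : Type u} (s t : V.Str X) : Prop := V.Adm s t id

/-- Infima in the fibres (initial lift of a structured source of identities). -/
def fibInf {X : Type u} {I : Type (u + 1)} (s : I → V.Str X) : V.Str X :=
  V.iLift (fun _ => X) s fun _ => id

/-- Suprema in the fibres (final lift of a structured sink of identities). -/
def fibSup {X : Type u} {I : Type (u + 1)} (s : I → V.Str X) : V.Str X :=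
  V.fLift (fun _ => X) s fun _ => id

/-- Binary suprema in the fibres. -/
def fibSup2 {X : Type u} (s t : V.Str X) : V.Str X :=
  V.fibSup fun b : ULift.{u + 1} Bool => bif b.down then s else t

/-- Initial lift of a single structured map. -/
def iLift1 {X Y : Type u} (t : V.Str Y) (f : X → Y) : V.Str X :=
  V.iLift (I := PUnit.{u + 2}) (fun _ => Y) (fun _ => t) fun _ => f

/-- Final lift of a single structured map. -/
def fLift1 {X Y : Type u} (t : V.Str X) (f : X → Y) : V.Str Y :=
  V.fLift (I := PUnit.{u + 2}) (fun _ => X) (fun _ => t) fun _ => f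

/-- The indiscrete structure (top of the fibre). -/
def indisc (X : Type u) : V.Str X :=
  V.iLift (I := PEmpty.{u + 2}) (fun e => e.elim) (fun e => e.elim) fun e => e.elim

/-- The discrete structure (bottom of the fibre). -/
def disc (X : Type u) : V.Str X :=
  V.fLift (I := PEmpty.{u + 2}) (fun e => e.elim) (fun e => e.elim) fun e => e.elim

/-- The product structure on a finitely-indexed (or any `Type 0`-indexed) family. -/
def piStrF {I : Type} {T : I → Type u} (t : ∀ i, V.Str (T i)) : V.Str (∀ i, T i) :=
  V.iLift (I := ULift.{u + 1} I) (fun i => T i.down) (fun i => t i.down) fun i g => g i.down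

/-- The product structure on a `Type u`-indexed family. -/
def piStrU {I : Type u} {T : I → Type u} (t : ∀ i, V.Str (T i)) : V.Str (∀ i, T i) :=
  V.iLift (I := ULift.{u + 1} I) (fun i => T i.down) (fun i => t i.down) fun i g => g i.down

/-- The binary (cartesian) product structure. -/
def prodStr {X Y : Type u} (s : V.Str X) (t : V.Str Y) : V.Str (X × Y) :=
  V.iLift (I := ULift.{u + 1} Bool) (fun b => Bool.rec Y X b.down)
    (fun b => Bool.rec (motive := fun c => V.Str (Bool.rec Y X c)) t s b.down)
    (fun b => Bool.rec (motive := fun c => X × Y → Bool.rec Y X c) Prod.snd Prod.fst b.down)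

end TopConstruct

/-- Cartesian closedness of a topological construct, witnessed concretely:
each hom-set carries an exponential structure for which admissibility of a map
into the exponential is equivalent to admissibility of its uncurrying. -/
structure CartesianClosed (V : TopConstruct.{u}) : Type (u + 1) where
  exp : ∀ {X Y : Type u} (s : V.Str X) (t : V.Str Y), V.Str {f : X → Y // V.Adm s t f}
  adm_curry_iff : ∀ {X Y Z : Type u} (s : V.Str X) (t : V.Str Y) (c : V.Str Z)
    (g : Z → {f : X → Y // V.Adm s t f}),
    V.Adm c (exp s t) g ↔ V.Adm (V.prodStr c s) t fun p => (g p.1).1 p.2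

/-- A symmetric monoidal structure on a topological construct `V` for which the
forgetful functor to `Set` is strict symmetric monoidal with respect to the
cartesian structure on `Set`. -/
structure MonStr (V : TopConstruct.{u}) : Type (u + 1) where
  tens : ∀ {X Y : Type u}, V.Str X → V.Str Y → V.Str (X × Y)
  unitStr : V.Str PUnit.{u + 1}
  tens_adm : ∀ {X X' Y Y' : Type u} {s : V.Str X} {s' : V.Str X'} {t : V.Str Y} {t' : V.Str Y'}
    {f : X → X'} {g : Y → Y'}, V.Adm s s' f → V.Adm t t' g →
    V.Adm (tens s t) (tens s' t') (Prod.map f g)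
  swap_adm : ∀ {X Y : Type u} (s : V.Str X) (t : V.Str Y), V.Adm (tens s t) (tens t s) Prod.swap
  assoc_adm : ∀ {X Y Z : Type u} (s : V.Str X) (t : V.Str Y) (r : V.Str Z),
    V.Adm (tens (tens s t) r) (tens s (tens t r)) fun p => (p.1.1, (p.1.2, p.2))
  assoc_inv_adm : ∀ {X Y Z : Type u} (s : V.Str X) (t : V.Str Y) (r : V.Str Z),
    V.Adm (tens s (tens t r)) (tens (tens s t) r) fun p => ((p.1, p.2.1), p.2.2)
  lunit_adm : ∀ {X : Type u} (s : V.Str X), V.Adm (tens unitStr s) s Prod.snd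
  lunit_inv_adm : ∀ {X : Type u} (s : V.Str X), V.Adm s (tens unitStr s) fun x => (PUnit.unit, x)
  runit_adm : ∀ {X : Type u} (s : V.Str X), V.Adm (tens s unitStr) s Prod.fst
  runit_inv_adm : ∀ {X : Type u} (s : V.Str X), V.Adm s (tens s unitStr) fun x => (x, PUnit.unit)

/-- The statement that the symmetric monoidal structure `M` is the cartesian one. -/
def MonStr.IsCartesian {V : TopConstruct.{u}} (M : MonStr V) : Prop :=
  (∀ {X Y : Type u} (s : V.Str X) (t : V.Str Y), M.tens s t = V.prodStr s t) ∧
    M.unitStr = V.indisc PUnit.{u + 1}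
universe v

/-- A classical `S`-sorted signature. -/
structure ClassSig (S : Type u) : Type (u + 1) where
  Op : Type u
  ar : Op → List S
  out : Op → S

/-- A classical `S`-sorted algebra (in `Set`) for a classical signature. -/
structure ClassAlg {S : Type u} (Sg : ClassSig S) : Type (u + 1) where
  car : S → Type u
  op : ∀ σ : Sg.Op, (∀ i : Fin (Sg.ar σ).length, car ((Sg.ar σ).get i)) → car (Sg.out σ)

/-- A morphism of classical algebras. -/
def IsClsHom {S : Type u} {Sg : ClassSig S} (A B : ClassAlg Sg)
    (h : ∀ s, A.car s → B.car s) : Prop :=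
  ∀ (σ : Sg.Op) (ts : ∀ i : Fin (Sg.ar σ).length, A.car ((Sg.ar σ).get i)),
    h _ (A.op σ ts) = B.op σ fun i => h _ (ts i)

/-- Ground terms over a classical signature with constants from `X`. -/
inductive Tm {S : Type u} (Sg : ClassSig S) (X : S → Type v) : S → Type (max u v)
  | var {s : S} : X s → Tm Sg X s
  | app (σ : Sg.Op) (ts : ∀ i : Fin (Sg.ar σ).length, Tm Sg X ((Sg.ar σ).get i)) :
      Tm Sg X (Sg.out σ)

/-- The term algebra (the free classical algebra) on an `S`-sorted set. -/
def termAlg {S : Type u} (Sg : ClassSig S) (X : S → Type u) : ClassAlg Sg :=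
  ⟨Tm Sg X, fun σ ts => .app σ ts⟩

/-- The unique extension of `f` to a homomorphism out of the term algebra
(the adjoint transpose `f^♯`). -/
def Tm.extend {S : Type u} {Sg : ClassSig S} {X : S → Type v} (B : ClassAlg Sg)
    (f : ∀ s, X s → B.car s) : ∀ {s : S}, Tm Sg X s → B.car s
  | _, .var x => f _ x
  | _, .app σ ts => B.op σ fun i => Tm.extend B f (ts i)

/-- Variables of a context: positions of the context list of the given sort. -/
def CtxVar {S : Type u} (Γ : List S) (s : S) : Type := {i : Fin Γ.length // Γ.get i = s}

/-- A syntactic equation in context over a classical signature. -/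
structure SynEq {S : Type u} (Sg : ClassSig S) : Type u where
  ctx : List S
  sort : S
  lhs : Tm Sg (CtxVar ctx) sort
  rhs : Tm Sg (CtxVar ctx) sort

/-- Interpretation of a term in context in a classical algebra at a valuation. -/
def ctxInterp {S : Type u} {Sg : ClassSig S} (B : ClassAlg Sg) {Γ : List S} {s : S}
    (t : Tm Sg (CtxVar Γ) s) (as : ∀ i : Fin Γ.length, B.car (Γ.get i)) : B.car s :=
  Tm.extend (X := CtxVar Γ) B (fun _ x => x.2 ▸ as x.1) t

/-- Satisfaction of a syntactic equation in context by a classical algebra. -/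
def ClsSat {S : Type u} {Sg : ClassSig S} (B : ClassAlg Sg) (e : SynEq Sg) : Prop :=
  ∀ as : ∀ i : Fin e.ctx.length, B.car (e.ctx.get i),
    ctxInterp B e.lhs as = ctxInterp B e.rhs as

/-- A congruence on a classical algebra. -/
def IsClsCong {S : Type u} {Sg : ClassSig S} (B : ClassAlg Sg)
    (r : ∀ s, B.car s → B.car s → Prop) : Prop :=
  (∀ s, Equivalence (r s)) ∧
    ∀ (σ : Sg.Op) (ts us : ∀ i : Fin (Sg.ar σ).length, B.car ((Sg.ar σ).get i)),
      (∀ i, r _ (ts i) (us i)) → r _ (B.op σ ts) (B.op σ us)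

/-- The congruence on a classical algebra generated by a set of syntactic
equations in context: the smallest congruence identifying the interpretations
of the two sides of each equation at all valuations. -/
def congGen {S : Type u} {Sg : ClassSig S} (B : ClassAlg Sg) (E : Set (SynEq Sg)) :
    ∀ s, B.car s → B.car s → Prop := fun s a b =>
  ∀ r : ∀ s, B.car s → B.car s → Prop, IsClsCong B r →
    (∀ e ∈ E, ∀ as, r e.sort (ctxInterp B e.lhs as) (ctxInterp B e.rhs as)) → r s a b

/-- A `V`-enriched `S`-sorted signature: operation symbols with input sorts,
an output sort and a parameter object of `V`. -/
structure VSig (V : TopConstruct.{u}) (S : Type u) : Type (u + 1) where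
  Op : Type u
  ar : Op → List S
  out : Op → S
  parC : Op → Type u
  parS : ∀ σ, V.Str (parC σ)

/-- The underlying classical `S`-sorted signature `|Σ|` of a `V`-enriched one:
one operation symbol `σ_p` for every `σ` and every point `p` of its parameter. -/
def VSig.toClass {V : TopConstruct.{u}} {S : Type u} (Sg : VSig V S) : ClassSig S where
  Op := Σ σ : Sg.Op, Sg.parC σ
  ar := fun σ => Sg.ar σ.1
  out := fun σ => Sg.out σ.1

/-- A `Σ`-algebra for a `V`-enriched `S`-sorted signature (relative to a
symmetric monoidal structure `M` on `V`): an `S`-sorted object of `V` equipped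
with an admissible operation `P ⊗ (A_{S₁} × ⋯ × A_{Sₙ}) → A_S` for each `σ`. -/
structure VAlg (V : TopConstruct.{u}) (M : MonStr V) {S : Type u} (Sg : VSig V S) :
    Type (u + 1) where
  car : S → Type u
  str : ∀ s, V.Str (car s)
  op : ∀ σ : Sg.Op,
    Sg.parC σ × (∀ i : Fin (Sg.ar σ).length, car ((Sg.ar σ).get i)) → car (Sg.out σ)
  op_adm : ∀ σ : Sg.Op,
    V.Adm (M.tens (Sg.parS σ) (V.piStrF fun i => str ((Sg.ar σ).get i))) (str (Sg.out σ)) (op σ)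

/-- The underlying classical `|Σ|`-algebra of a `Σ`-algebra. -/
def VAlg.cls {V : TopConstruct.{u}} {M : MonStr V} {S : Type u} {Sg : VSig V S}
    (A : VAlg V M Sg) : ClassAlg Sg.toClass :=
  ⟨A.car, fun σ ts => A.op σ.1 (σ.2, ts)⟩

/-- A morphism of `Σ`-algebras: an `S`-sorted admissible family commuting with
all the operations. -/
def IsVHom {V : TopConstruct.{u}} {M : MonStr V} {S : Type u} {Sg : VSig V S}
    (A B : VAlg V M Sg) (h : ∀ s, A.car s → B.car s) : Prop :=
  (∀ s, V.Adm (A.str s) (B.str s) (h s)) ∧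
    ∀ (σ : Sg.Op) (p : Sg.parC σ) (ts : ∀ i : Fin (Sg.ar σ).length, A.car ((Sg.ar σ).get i)),
      h _ (A.op σ (p, ts)) = B.op σ (p, fun i => h _ (ts i))
/-- The components of a candidate algebraic `Σ`-operation with input sorts
`ins`, output sort `o` and parameter carrier `P`. -/
def OpFam (V : TopConstruct.{u}) (M : MonStr V) {S : Type u} (Sg : VSig V S)
    (ins : List S) (o : S) (P : Type u) : Type (u + 1) :=
  ∀ A : VAlg V M Sg, P × (∀ i : Fin ins.length, A.car (ins.get i)) → A.car o

/-- Admissibility of all components of a candidate algebraic `Σ`-operation. -/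
def OpAdm {V : TopConstruct.{u}} {M : MonStr V} {S : Type u} {Sg : VSig V S}
    {ins : List S} {o : S} {P : Type u} (pS : V.Str P) (ω : OpFam V M Sg ins o P) : Prop :=
  ∀ A : VAlg V M Sg,
    V.Adm (M.tens pS (V.piStrF fun i => A.str (ins.get i))) (A.str o) (ω A)

/-- Naturality of a candidate algebraic `Σ`-operation. -/
def OpNat {V : TopConstruct.{u}} {M : MonStr V} {S : Type u} {Sg : VSig V S}
    {ins : List S} {o : S} {P : Type u} (ω : OpFam V M Sg ins o P) : Prop :=
  ∀ (A B : VAlg V M Sg) (h : ∀ s, A.car s → B.car s), IsVHom A B h →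
    ∀ (p : P) (ts : ∀ i : Fin ins.length, A.car (ins.get i)),
      h o (ω A (p, ts)) = ω B (p, fun i => h _ (ts i))

/-- An algebraic `Σ`-equation: a pair of algebraic `Σ`-operations
(natural transformations `P ⊗ U^{S̄} ⟹ U^S`) of the same type. -/
structure AlgEq (V : TopConstruct.{u}) (M : MonStr V) {S : Type u} (Sg : VSig V S) :
    Type (u + 1) where
  ins : List S
  out : S
  parC : Type u
  parS : V.Str parC
  lhs : OpFam V M Sg ins out parC
  rhs : OpFam V M Sg ins out parC
  lhs_adm : OpAdm parS lhs
  rhs_adm : OpAdm parS rhs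
  lhs_nat : OpNat lhs
  rhs_nat : OpNat rhs

/-- Satisfaction of an algebraic `Σ`-equation by a `Σ`-algebra. -/
def VSat {V : TopConstruct.{u}} {M : MonStr V} {S : Type u} {Sg : VSig V S}
    (A : VAlg V M Sg) (e : AlgEq V M Sg) : Prop :=
  e.lhs A = e.rhs A

/-- The indiscrete `Σ`-algebra determined by a classical `|Σ|`-algebra. -/
def indiscAlg (V : TopConstruct.{u}) (M : MonStr V) {S : Type u} (Sg : VSig V S)
    (B : ClassAlg Sg.toClass) : VAlg V M Sg where
  car := B.car
  str := fun s => V.indisc (B.car s)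
  op := fun σ pts => B.op ⟨σ, pts.1⟩ pts.2
  op_adm := fun σ => V.iLift_initial _ _ _ _ _ fun i => i.elim

/- A `Σ`-morphism out of `F^Σ X` into a `𝒯`-algebra is in particular a `|Σ|`-morphism into an
algebra satisfying `|ℰ|`, so its kernel contains `∼^ℰ`; it therefore factors through the quotient,
admissibly so since the quotient carries the final structure. As `Quot.mk` is surjective,
uniqueness of the factorisation reduces to that of the transpose out of `F^Σ X`. -/

theorem Tm.extend_comp_of_isClsHom {S : Type u} {Sg : ClassSig S} {B C : ClassAlg Sg}
    {h : ∀ s, B.car s → C.car s} (hh : IsClsHom B C h) {X : S → Type v}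
    (f : ∀ s, X s → B.car s) {s : S} (t : Tm Sg X s) :
    h s (Tm.extend B f t) = Tm.extend C (fun s x => h s (f s x)) t := by
  induction t with
  | var x => rfl
  | app σ ts ih =>
    change h _ (B.op σ _) = C.op σ _
    rw [hh σ]
    exact congrArg _ (funext ih)

theorem ctxInterp_comp_of_isClsHom {S : Type u} {Sg : ClassSig S} {B C : ClassAlg Sg}
    {h : ∀ s, B.car s → C.car s} (hh : IsClsHom B C h) {Γ : List S} {s : S}
    (t : Tm Sg (CtxVar Γ) s) (as : ∀ i : Fin Γ.length, B.car (Γ.get i)) :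
    h s (ctxInterp B t as) = ctxInterp C t (fun i => h _ (as i)) := by
  unfold ctxInterp
  rw [Tm.extend_comp_of_isClsHom hh]
  congr 1
  funext s ⟨i, hi⟩
  subst hi
  rfl

theorem congGen_le_ker {S : Type u} {Sg : ClassSig S} {B C : ClassAlg Sg}
    {h : ∀ s, B.car s → C.car s} (hh : IsClsHom B C h) {E : Set (SynEq Sg)}
    (hC : ∀ e ∈ E, ClsSat C e) {s : S} {a b : B.car s} (hab : congGen B E s a b) :
    h s a = h s b := by
  refine hab (fun s a b => h s a = h s b) ⟨fun s => ⟨fun _ => rfl, Eq.symm, Eq.trans⟩, ?_⟩ ?_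
  · intro σ ts us hts
    rw [hh σ ts, hh σ us]
    exact congrArg _ (funext hts)
  · intro e he as
    rw [ctxInterp_comp_of_isClsHom hh, ctxInterp_comp_of_isClsHom hh]
    exact hC e he _

theorem IsVHom.isClsHom {V : TopConstruct.{u}} {M : MonStr V} {S : Type u} {Sg : VSig V S}
    {A B : VAlg V M Sg} {h : ∀ s, A.car s → B.car s} (hh : IsVHom A B h) :
    IsClsHom A.cls B.cls h :=
  fun σ ts => hh.2 σ.1 σ.2 ts

namespace TopConstruct

variable (V : TopConstruct.{u})

theorem adm_fLift1 {X Y : Type u} (t : V.Str X) (q : X → Y) : V.Adm t (V.fLift1 t q) q :=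
  V.fLift_adm (fun _ => X) (fun _ => t) (fun _ => q) PUnit.unit

theorem adm_fLift1_iff {X Y Z : Type u} (t : V.Str X) (q : X → Y) (w : V.Str Z) (g : Y → Z) :
    V.Adm (V.fLift1 t q) w g ↔ V.Adm t w (g ∘ q) :=
  ⟨fun hg => V.adm_comp (V.adm_fLift1 t q) hg, fun hg => V.fLift_final _ _ _ _ _ fun _ => hg⟩

end TopConstruct

section QuotientAlgebra

variable {V : TopConstruct.{u}} {M : MonStr V} {S : Type u} {Sg : VSig V S}
  {B A : VAlg V M Sg} {r : ∀ s, B.car s → B.car s → Prop}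
  {qop : ∀ σ : Sg.Op, Sg.parC σ × (∀ i : Fin (Sg.ar σ).length, Quot (r ((Sg.ar σ).get i))) →
    Quot (r (Sg.out σ))}

theorem quot_lift_map_qop
    (hq : ∀ (σ : Sg.Op) (p : Sg.parC σ) ts,
      qop σ (p, fun i => Quot.mk _ (ts i)) = Quot.mk _ (B.op σ (p, ts)))
    {g : ∀ s, B.car s → A.car s} (hg : ∀ s a b, r s a b → g s a = g s b)
    (hgop : ∀ (σ : Sg.Op) (p : Sg.parC σ) ts, g _ (B.op σ (p, ts)) = A.op σ (p, fun i => g _ (ts i)))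
    (σ : Sg.Op) (p : Sg.parC σ) (ts : ∀ i, Quot (r ((Sg.ar σ).get i))) :
    Quot.lift (g _) (hg _) (qop σ (p, ts)) = A.op σ (p, fun i => Quot.lift (g _) (hg _) (ts i)) := by
  obtain ⟨us, rfl⟩ : ∃ us : ∀ i, B.car ((Sg.ar σ).get i), (fun i => Quot.mk _ (us i)) = ts :=
    ⟨fun i => (ts i).out, funext fun i => Quot.out_eq (ts i)⟩
  rw [hq σ p us]
  exact hgop σ p us

theorem isVHom_comp_quot_mk
    (hq : ∀ (σ : Sg.Op) (p : Sg.parC σ) ts,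
      qop σ (p, fun i => Quot.mk _ (ts i)) = Quot.mk _ (B.op σ (p, ts)))
    {h : ∀ s, Quot (r s) → A.car s}
    (hadm : ∀ s, V.Adm (V.fLift1 (B.str s) (Quot.mk (r s))) (A.str s) (h s))
    (hop : ∀ (σ : Sg.Op) (p : Sg.parC σ) ts, h _ (qop σ (p, ts)) = A.op σ (p, fun i => h _ (ts i))) :
    IsVHom B A fun s => h s ∘ Quot.mk (r s) := by
  refine ⟨fun s => (V.adm_fLift1_iff _ _ _ _).mp (hadm s), fun σ p ts => ?_⟩
  change h _ (Quot.mk _ (B.op σ (p, ts))) = _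
  rw [← hq σ p ts, hop]
  rfl

end QuotientAlgebra

theorem statement17_general (V : TopConstruct.{u}) (M : MonStr V) {S : Type u} (Sg : VSig V S)
    (E : Set (AlgEq V M Sg)) (E' : Set (SynEq Sg.toClass))
    (hE' : ∀ A : VAlg V M Sg, (∀ e ∈ E, VSat A e) ↔ ∀ e' ∈ E', ClsSat A.cls e')
    (X : S → V.Obj)
    -- the free `Σ`-algebra `F^Σ X` on `X`, with unit `η`:
    (FA : VAlg V M Sg) (η : ∀ s, (X s).1 → FA.car s)
    (hη : ∀ s, V.Adm (X s).2 (FA.str s) (η s))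
    (hfree : ∀ (A : VAlg V M Sg) (f : ∀ s, (X s).1 → A.car s),
      (∀ s, V.Adm (X s).2 (A.str s) (f s)) →
      ∃! h : ∀ s, FA.car s → A.car s, IsVHom FA A h ∧ ∀ s x, h s (η s x) = f s x)
    -- the quotient `Σ`-algebra `F^Σ X/∼^ℰ`, where `∼^ℰ = congGen FA.cls E'`:
    (qop : ∀ σ : Sg.Op,
      Sg.parC σ ×
        (∀ i : Fin (Sg.ar σ).length, Quot (congGen FA.cls E' ((Sg.ar σ).get i))) →
        Quot (congGen FA.cls E' (Sg.out σ)))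
    (hq : ∀ (σ : Sg.Op) (p : Sg.parC σ) ts,
      qop σ (p, fun i => Quot.mk _ (ts i)) = Quot.mk _ (FA.op σ (p, ts))) :
    -- the unit `X → U^𝒯 (F^Σ X/∼^ℰ)` is admissible ...
    (∀ s, V.Adm (X s).2 (V.fLift1 (FA.str s) (Quot.mk (congGen FA.cls E' s)))
      fun x => Quot.mk (congGen FA.cls E' s) (η s x)) ∧
    -- ... and universal: `F^Σ X/∼^ℰ` is the free `𝒯`-algebra on `X`
    ∀ (A : VAlg V M Sg), (∀ e ∈ E, VSat A e) →
      ∀ f : ∀ s, (X s).1 → A.car s, (∀ s, V.Adm (X s).2 (A.str s) (f s)) →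
      ∃! h : ∀ s, Quot (congGen FA.cls E' s) → A.car s,
        (∀ s, V.Adm (V.fLift1 (FA.str s) (Quot.mk (congGen FA.cls E' s))) (A.str s) (h s)) ∧
        (∀ (σ : Sg.Op) (p : Sg.parC σ) ts,
          h _ (qop σ (p, ts)) = A.op σ (p, fun i => h _ (ts i))) ∧
        ∀ s x, h s (Quot.mk (congGen FA.cls E' s) (η s x)) = f s x := by
  refine ⟨fun s => V.adm_comp (hη s) (V.adm_fLift1 _ _), fun A hA f hf => ?_⟩
  obtain ⟨g, ⟨hgV, hgη⟩, hg_unique⟩ := hfree A f hf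
  have hg_ker : ∀ s a b, congGen FA.cls E' s a b → g s a = g s b :=
    fun _ _ _ => congGen_le_ker hgV.isClsHom ((hE' A).mp hA)
  refine ⟨fun s => Quot.lift (g s) (hg_ker s),
    ⟨fun s => (V.adm_fLift1_iff _ _ _ _).mpr (hgV.1 s), quot_lift_map_qop hq hg_ker hgV.2, hgη⟩,
    fun h ⟨hadm, hop, hη'⟩ => ?_⟩
  have hgh : (fun s => h s ∘ Quot.mk _) = g :=
    hg_unique _ ⟨isVHom_comp_quot_mk hq hadm hop, hη'⟩
  funext s x
  induction x using Quot.ind with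
  | mk a => exact congrFun (congrFun hgh s) a

/-- Suppose `(𝒱, ⊗, I) = (𝒱, ×, 1)` and `𝒱` is cartesian closed.
Let `𝒯 = (Σ, ℰ)` be a `𝒱`-enriched `𝒮`-sorted equational theory (with underlying
classical equations `|ℰ| = E'`), let `X` be an object of `𝒱^𝒮`, let `F^Σ X` be
the free `Σ`-algebra on `X` (hypothesized via its universal property), and let
`∼^ℰ` be the `Σ`-congruence on `F^Σ X` generated by `ℰ`.  Then the quotient
`Σ`-algebra `F^Σ X/∼^ℰ`, with unit `X → U^𝒯(F^Σ X/∼^ℰ)` the composite of the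
unit of `F^Σ ⊣ U^Σ` with the quotient morphism, is the free `𝒯`-algebra on `X`:
the unit is admissible, and for every `𝒯`-algebra `A` and `𝒱^𝒮`-morphism
`f : X → U^𝒯 A` there is a unique morphism of `Σ`-algebras
`f^♯ : F^Σ X/∼^ℰ → A` with `f^♯ ∘ η = f`. -/
theorem statement17 (V : TopConstruct.{u}) (M : MonStr V) (hM : M.IsCartesian)
    (cc : CartesianClosed V) {S : Type u} (Sg : VSig V S)
    (E : Set (AlgEq V M Sg)) (E' : Set (SynEq Sg.toClass))
    (hE' : ∀ A : VAlg V M Sg, (∀ e ∈ E, VSat A e) ↔ ∀ e' ∈ E', ClsSat A.cls e')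
    (X : S → V.Obj)
    -- the free `Σ`-algebra `F^Σ X` on `X`, with unit `η`:
    (FA : VAlg V M Sg) (η : ∀ s, (X s).1 → FA.car s)
    (hη : ∀ s, V.Adm (X s).2 (FA.str s) (η s))
    (hfree : ∀ (A : VAlg V M Sg) (f : ∀ s, (X s).1 → A.car s),
      (∀ s, V.Adm (X s).2 (A.str s) (f s)) →
      ∃! h : ∀ s, FA.car s → A.car s, IsVHom FA A h ∧ ∀ s x, h s (η s x) = f s x)
    -- the quotient `Σ`-algebra `F^Σ X/∼^ℰ`, where `∼^ℰ = congGen FA.cls E'`: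
    (qop : ∀ σ : Sg.Op,
      Sg.parC σ ×
        (∀ i : Fin (Sg.ar σ).length, Quot (congGen FA.cls E' ((Sg.ar σ).get i))) →
        Quot (congGen FA.cls E' (Sg.out σ)))
    (hq : ∀ (σ : Sg.Op) (p : Sg.parC σ) ts,
      qop σ (p, fun i => Quot.mk _ (ts i)) = Quot.mk _ (FA.op σ (p, ts)))
    (hqadm : ∀ σ : Sg.Op,
      V.Adm (M.tens (Sg.parS σ)
          (V.piStrF fun i => V.fLift1 (FA.str ((Sg.ar σ).get i)) (Quot.mk _)))
        (V.fLift1 (FA.str (Sg.out σ)) (Quot.mk _)) (qop σ)) :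
    -- the unit `X → U^𝒯 (F^Σ X/∼^ℰ)` is admissible ...
    (∀ s, V.Adm (X s).2 (V.fLift1 (FA.str s) (Quot.mk (congGen FA.cls E' s)))
      fun x => Quot.mk (congGen FA.cls E' s) (η s x)) ∧
    -- ... and universal: `F^Σ X/∼^ℰ` is the free `𝒯`-algebra on `X`
    ∀ (A : VAlg V M Sg), (∀ e ∈ E, VSat A e) →
      ∀ f : ∀ s, (X s).1 → A.car s, (∀ s, V.Adm (X s).2 (A.str s) (f s)) →
      ∃! h : ∀ s, Quot (congGen FA.cls E' s) → A.car s,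
        (∀ s, V.Adm (V.fLift1 (FA.str s) (Quot.mk (congGen FA.cls E' s))) (A.str s) (h s)) ∧
        (∀ (σ : Sg.Op) (p : Sg.parC σ) ts,
          h _ (qop σ (p, ts)) = A.op σ (p, fun i => h _ (ts i))) ∧
        ∀ s x, h s (Quot.mk (congGen FA.cls E' s) (η s x)) = f s x :=
  statement17_general V M Sg E E' hE' X FA η hη hfree qop hq
end

section
/- Suppose 𝒱 is a topological category over Set whose symmetric monoidal structure is the cartesian one (𝒱, ×, 1), 𝒱 is cartesian closed, and the faithful topological functor |-| : 𝒱 → Set is represented by the terminal object 1. Then the small subcategory of arities 𝕟_𝒮 ↪ 𝒱^𝒮 is eleutheric: for every object J of 𝕟_𝒮, the representable 𝒱-functor 𝒱^𝒮(J, −) : 𝒱^𝒮 → 𝒱 preserves colimits weighted by the weights 𝒱^𝒮(j−, X) : 𝕟_𝒮^op → 𝒱 for all X ∈ 𝒱^𝒮 (equivalently, it preserves 𝒱-enriched left Kan extensions along the inclusion j : 𝕟_𝒮 ↪ 𝒱^𝒮). -/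
universe u

section Statement19

/-- `𝒮`-sorted morphisms of `𝒱^𝒮` (sortwise admissible functions). -/
def SHom {S : Type u} (V : TopConstruct.{u}) (X Y : S → V.Obj) : Type u :=
  ∀ s, {f : (X s).1 → (Y s).1 // V.Adm (X s).2 (Y s).2 f}

/-- Identity morphism of `𝒱^𝒮`. -/
def sId {S : Type u} (V : TopConstruct.{u}) (X : S → V.Obj) : SHom V X X :=
  fun _ => ⟨id, V.adm_id _⟩

/-- Composition of morphisms of `𝒱^𝒮`. -/
def sComp {S : Type u} {V : TopConstruct.{u}} {X Y Z : S → V.Obj}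
    (f : SHom V X Y) (g : SHom V Y Z) : SHom V X Z :=
  fun s => ⟨(g s).1 ∘ (f s).1, V.adm_comp (f s).2 (g s).2⟩

/-- The hom-object `𝒱^𝒮(X, Y) = ∏_{S∈𝒮} [X_S, Y_S]` of the tensored
`𝒱`-category `𝒱^𝒮`. -/
def sHomStr {S : Type u} (V : TopConstruct.{u}) (cc : CartesianClosed V)
    (X Y : S → V.Obj) : V.Str (SHom V X Y) :=
  V.piStrU fun s => cc.exp (X s).2 (Y s).2

/-- Objects of the subcategory of arities `𝕟_𝒮`: finitely supported families of
natural numbers indexed by the sorts. -/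
def NSort (S : Type u) : Type u := {J : S → ℕ // {s | J s ≠ 0}.Finite}

/-- The copower `n · 1` of the terminal object `1` of `𝒱` (the coproduct of `n`
copies of the indiscrete singleton, i.e. the final lift of the insertions). -/
def copow (V : TopConstruct.{u}) (n : ℕ) : V.Obj :=
  ⟨ULift.{u} (Fin n),
    V.fLift (I := ULift.{u + 1} (Fin n)) (fun _ => PUnit.{u + 1})
      (fun _ => V.indisc PUnit.{u + 1}) fun i _ => ULift.up i.down⟩

/-- The object `(n_S · 1)_{S ∈ 𝒮}` of `𝒱^𝒮` corresponding to an arity `J ∈ 𝕟_𝒮`. -/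
def toSObj (V : TopConstruct.{u}) {S : Type u} (J : NSort S) : S → V.Obj :=
  fun s => copow V (J.1 s)

/-- A `𝒱`-functor `D : 𝕟_𝒮 → 𝒱^𝒮`: an assignment on objects together with an
action on hom-sets that is admissible on hom-objects and preserves identities
and composition. -/
structure NFunctor (V : TopConstruct.{u}) (cc : CartesianClosed V) (S : Type u) :
    Type (u + 1) where
  obj : NSort S → (S → V.Obj)
  map : ∀ {J K : NSort S}, SHom V (toSObj V J) (toSObj V K) → SHom V (obj J) (obj K)
  map_adm : ∀ J K : NSort S,
    V.Adm (sHomStr V cc (toSObj V J) (toSObj V K)) (sHomStr V cc (obj J) (obj K))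
      fun f => map f
  map_id : ∀ J : NSort S, map (sId V (toSObj V J)) = sId V (obj J)
  map_comp : ∀ {J K L : NSort S} (f : SHom V (toSObj V J) (toSObj V K))
    (g : SHom V (toSObj V K) (toSObj V L)), map (sComp f g) = sComp (map f) (map g)

/-- The set of `𝒱`-natural transformations `𝒱^𝒮(j−, X) ⟹ 𝒱^𝒮(D−, Z)`:
sortwise admissible components satisfying `𝒱`-naturality. -/
def NatCar {S : Type u} (V : TopConstruct.{u}) (cc : CartesianClosed V)
    (D : NFunctor V cc S) (X Z : S → V.Obj) : Type u :=
  {α : ∀ J : NSort S,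
      {g : SHom V (toSObj V J) X → SHom V (D.obj J) Z //
        V.Adm (sHomStr V cc (toSObj V J) X) (sHomStr V cc (D.obj J) Z) g} //
    ∀ (J K : NSort S) (f : SHom V (toSObj V J) (toSObj V K)) (w : SHom V (toSObj V K) X),
      (α J).1 (sComp f w) = sComp (D.map f) ((α K).1 w)}

/-- The `𝒱`-object of `𝒱`-natural transformations `𝒱^𝒮(j−, X) ⟹ 𝒱^𝒮(D−, Z)`
(initial structure of the inclusion into the product of exponentials). -/
def natStr {S : Type u} (V : TopConstruct.{u}) (cc : CartesianClosed V)
    (D : NFunctor V cc S) (X Z : S → V.Obj) : V.Str (NatCar V cc D X Z) :=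
  V.iLift1
    (V.piStrU fun J : NSort S =>
      cc.exp (sHomStr V cc (toSObj V J) X) (sHomStr V cc (D.obj J) Z))
    fun α => α.1

/-- A cylinder `λ : 𝒱^𝒮(j−, X) ⟹ 𝒱^𝒮(D−, C)` exhibiting a candidate weighted
colimit `C` of `D` weighted by `𝒱^𝒮(j−, X)`. -/
structure Cyl {S : Type u} (V : TopConstruct.{u}) (cc : CartesianClosed V)
    (D : NFunctor V cc S) (X C : S → V.Obj) : Type u where
  lam : ∀ J : NSort S, SHom V (toSObj V J) X → SHom V (D.obj J) C
  adm : ∀ J : NSort S,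
    V.Adm (sHomStr V cc (toSObj V J) X) (sHomStr V cc (D.obj J) C) (lam J)
  natural : ∀ (J K : NSort S) (f : SHom V (toSObj V J) (toSObj V K))
    (w : SHom V (toSObj V K) X), lam J (sComp f w) = sComp (D.map f) (lam K w)

/-- The cylinder `c` exhibits `C` as the weighted colimit `𝒱^𝒮(j−, X) ∗ D` in
`𝒱^𝒮`: for every `Z`, the canonical map `𝒱^𝒮(C, Z) → Nat(𝒱^𝒮(j−, X), 𝒱^𝒮(D−, Z))`
is a bijection and an isomorphism in `𝒱` (it and its inverse are admissible). -/
def IsWColim {S : Type u} {V : TopConstruct.{u}} {cc : CartesianClosed V}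
    {D : NFunctor V cc S} {X C : S → V.Obj} (c : Cyl V cc D X C) : Prop :=
  ∀ Z : S → V.Obj,
    (∀ h h' : SHom V C Z,
      (∀ (J : NSort S) (w : SHom V (toSObj V J) X),
        sComp (c.lam J w) h = sComp (c.lam J w) h') → h = h') ∧
    (∀ α : NatCar V cc D X Z, ∃ h : SHom V C Z,
      ∀ (J : NSort S) (w : SHom V (toSObj V J) X),
        sComp (c.lam J w) h = (α.1 J).1 w) ∧
    (∀ Φ : SHom V C Z → NatCar V cc D X Z,
      (∀ h J w, ((Φ h).1 J).1 w = sComp (c.lam J w) h) →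
      V.Adm (sHomStr V cc C Z) (natStr V cc D X Z) Φ) ∧
    (∀ Ψ : NatCar V cc D X Z → SHom V C Z,
      (∀ α J w, sComp (c.lam J w) (Ψ α) = (α.1 J).1 w) →
      V.Adm (natStr V cc D X Z) (sHomStr V cc C Z) Ψ)

/-- The hom-set of `𝒱`. -/
def VHomSet (V : TopConstruct.{u}) (A B : V.Obj) : Type u :=
  {f : A.1 → B.1 // V.Adm A.2 B.2 f}

/-- The internal hom `[A, B]` of `𝒱`. -/
def vHomStr (V : TopConstruct.{u}) (cc : CartesianClosed V) (A B : V.Obj) :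
    V.Str (VHomSet V A B) :=
  cc.exp A.2 B.2

/-- The value of the representable `𝒱`-functor `T = 𝒱^𝒮(J₀, −) : 𝒱^𝒮 → 𝒱`. -/
def TObj (V : TopConstruct.{u}) (cc : CartesianClosed V) {S : Type u}
    (J₀ : NSort S) (C : S → V.Obj) : V.Obj :=
  ⟨SHom V (toSObj V J₀) C, sHomStr V cc (toSObj V J₀) C⟩

/-- The set of `𝒱`-natural transformations `𝒱^𝒮(j−, X) ⟹ 𝒱(T(D−), Y)` in `𝒱`,
for the composite diagram `T ∘ D` with `T = 𝒱^𝒮(J₀, −)`. -/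
def NatCarV {S : Type u} (V : TopConstruct.{u}) (cc : CartesianClosed V)
    (D : NFunctor V cc S) (X : S → V.Obj) (J₀ : NSort S) (Y : V.Obj) : Type u :=
  {α : ∀ K : NSort S,
      {g : SHom V (toSObj V K) X → VHomSet V (TObj V cc J₀ (D.obj K)) Y //
        V.Adm (sHomStr V cc (toSObj V K) X)
          (vHomStr V cc (TObj V cc J₀ (D.obj K)) Y) g} //
    ∀ (K K' : NSort S) (f : SHom V (toSObj V K) (toSObj V K'))
      (w : SHom V (toSObj V K') X) (u : SHom V (toSObj V J₀) (D.obj K)),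
      ((α K).1 (sComp f w)).1 u = ((α K').1 w).1 (sComp u (D.map f))}

/-- The `𝒱`-object of `𝒱`-natural transformations `𝒱^𝒮(j−, X) ⟹ 𝒱(T(D−), Y)`. -/
def natStrV {S : Type u} (V : TopConstruct.{u}) (cc : CartesianClosed V)
    (D : NFunctor V cc S) (X : S → V.Obj) (J₀ : NSort S) (Y : V.Obj) :
    V.Str (NatCarV V cc D X J₀ Y) :=
  V.iLift1
    (V.piStrU fun K : NSort S =>
      cc.exp (sHomStr V cc (toSObj V K) X) (vHomStr V cc (TObj V cc J₀ (D.obj K)) Y))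
    fun α => α.1

/-!
Since `1` represents `|-|`, every function out of `n · 1` is a morphism, so `𝒱^𝒮(J₀, C)` is the
finite product `∏ C(s)` over the points `(s, i)` of `J₀`. It therefore suffices that finite
products of components of `C`, multiplied by an arbitrary parameter object `P`, are colimits of
the corresponding products for `D`. A single component is handled by the universal property of `C`
against the exponential `[P, Y]` placed at one sort: this is where cartesian closedness enters.
The product is then built one coordinate at a time; the stages `K`, `K'` of `𝕟_𝒮` used for
different coordinates are merged into `K + K'`, and finitely many points of `C` always come from a
common stage because the legs of `C` are jointly surjective and `𝕟_𝒮` has finite coproducts.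
-/

namespace TopConstruct

variable {V : TopConstruct.{u}}

theorem Adm.comp {A B C : Type u} {s : V.Str A} {t : V.Str B} {r : V.Str C} {g : B → C}
    {f : A → B} (hg : V.Adm t r g) (hf : V.Adm s t f) : V.Adm s r fun x => g (f x) :=
  V.adm_comp hf hg

theorem adm_indisc {A B : Type u} (s : V.Str A) (f : A → B) : V.Adm s (V.indisc B) f :=
  V.iLift_initial _ _ _ s f fun i => i.elim

variable (V) in
def PointRepresents : Prop :=
  ∀ {X : Type u} (s : V.Str X) (x : X), V.Adm (V.indisc PUnit.{u + 1}) s fun _ => x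

theorem adm_const (hrep : V.PointRepresents) {A B : Type u} (s : V.Str A) (t : V.Str B) (y : B) :
    V.Adm s t fun _ => y :=
  (hrep t y).comp (adm_indisc s fun _ => PUnit.unit)

theorem adm_fst {A B : Type u} (s : V.Str A) (t : V.Str B) : V.Adm (V.prodStr s t) s Prod.fst :=
  V.iLift_adm _ _ _ (ULift.up true)

theorem adm_snd {A B : Type u} (s : V.Str A) (t : V.Str B) : V.Adm (V.prodStr s t) t Prod.snd :=
  V.iLift_adm _ _ _ (ULift.up false)

theorem Adm.prodMk {W A B : Type u} {w : V.Str W} {s : V.Str A} {t : V.Str B} {f : W → A}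
    {g : W → B} (hf : V.Adm w s f) (hg : V.Adm w t g) :
    V.Adm w (V.prodStr s t) fun x => (f x, g x) :=
  V.iLift_initial _ _ _ w _ fun ⟨b⟩ => by cases b <;> assumption

theorem Adm.eval {cc : CartesianClosed V} {W A B : Type u} {w : V.Str W} {s : V.Str A}
    {t : V.Str B} {f : W → {g : A → B // V.Adm s t g}} {a : W → A}
    (hf : V.Adm w (cc.exp s t) f) (ha : V.Adm w s a) : V.Adm w t fun x => (f x).1 (a x) :=
  ((cc.adm_curry_iff s t _ id).mp (V.adm_id _)).comp (hf.prodMk ha)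

theorem adm_piStrU_apply {I : Type u} {T : I → Type u} (t : ∀ i, V.Str (T i)) (i : I) :
    V.Adm (V.piStrU t) (t i) fun g => g i :=
  V.iLift_adm _ _ _ (ULift.up i)

theorem adm_piStrU {I : Type u} {T : I → Type u} {t : ∀ i, V.Str (T i)} {W : Type u}
    {w : V.Str W} {f : W → ∀ i, T i} (h : ∀ i, V.Adm w (t i) fun x => f x i) :
    V.Adm w (V.piStrU t) f :=
  V.iLift_initial _ _ _ w f fun i => h i.down

theorem adm_piSplitAt_symm {I : Type u} [DecidableEq I] {T : I → Type u}
    (t : ∀ i, V.Str (T i)) (i₀ : I) :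
    V.Adm (V.prodStr (t i₀) (V.piStrU fun j : {j // j ≠ i₀} => t j)) (V.piStrU t)
      (Equiv.piSplitAt i₀ T).symm := by
  refine adm_piStrU fun j => ?_
  by_cases h : j = i₀
  · subst h
    simpa using adm_fst _ _
  · simpa [h] using (adm_piStrU_apply _ (⟨j, h⟩ : {j // j ≠ i₀})).comp (adm_snd _ _)

theorem adm_iLift1 {A B : Type u} (t : V.Str B) (f : A → B) : V.Adm (V.iLift1 t f) t f :=
  V.iLift_adm _ _ _ PUnit.unit

theorem adm_iLift1_of {A B W : Type u} {t : V.Str B} {f : A → B} {w : V.Str W} {g : W → A}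
    (h : V.Adm w t fun x => f (g x)) : V.Adm w (V.iLift1 t f) g :=
  V.iLift_initial _ _ _ w g fun _ => h

def curryHom (hrep : V.PointRepresents) {A B C : Type u} {a : V.Str A} {b : V.Str B}
    {c : V.Str C} {F : A × B → C} (hF : V.Adm (V.prodStr a b) c F) (x : A) :
    {f : B → C // V.Adm b c f} :=
  ⟨fun y => F (x, y), hF.comp ((adm_const hrep b a x).prodMk (V.adm_id b))⟩

theorem adm_curryHom (cc : CartesianClosed V) (hrep : V.PointRepresents) {A B C : Type u}
    {a : V.Str A} {b : V.Str B} {c : V.Str C} {F : A × B → C}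
    (hF : V.Adm (V.prodStr a b) c F) : V.Adm a (cc.exp b c) (curryHom hrep hF) :=
  (cc.adm_curry_iff _ _ _ _).mpr hF

end TopConstruct

open TopConstruct

section SortedHoms

variable {V : TopConstruct.{u}} {S : Type u}

theorem SHom.ext {A B : S → V.Obj} {f g : SHom V A B} (h : ∀ s a, (f s).1 a = (g s).1 a) :
    f = g :=
  funext fun s => Subtype.ext (funext (h s))

theorem SHom.congr_apply {A B : S → V.Obj} {f g : SHom V A B} (h : f = g) (s : S)
    (a : (A s).1) : (f s).1 a = (g s).1 a :=
  h ▸ rfl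

theorem sComp_assoc {A B C Z : S → V.Obj} (f : SHom V A B) (g : SHom V B C) (h : SHom V C Z) :
    sComp (sComp f g) h = sComp f (sComp g h) :=
  rfl

theorem sId_sComp {A B : S → V.Obj} (f : SHom V A B) : sComp (sId V A) f = f :=
  rfl

theorem adm_sHomStr_apply (cc : CartesianClosed V) (A B : S → V.Obj) (s : S) :
    V.Adm (sHomStr V cc A B) (cc.exp (A s).2 (B s).2) fun g => g s :=
  adm_piStrU_apply _ s

theorem adm_sComp (cc : CartesianClosed V) (A B C : S → V.Obj) :
    V.Adm (V.prodStr (sHomStr V cc A B) (sHomStr V cc B C)) (sHomStr V cc A C)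
      fun p => sComp p.1 p.2 :=
  adm_piStrU fun s => (cc.adm_curry_iff _ _ _ _).mpr <| by
    have hp := adm_fst (V.prodStr (sHomStr V cc A B) (sHomStr V cc B C)) (A s).2
    have hf := (adm_sHomStr_apply cc A B s).comp ((adm_fst _ _).comp hp)
    have hg := (adm_sHomStr_apply cc B C s).comp ((adm_snd _ _).comp hp)
    exact hg.eval (hf.eval (adm_snd _ _))

theorem NFunctor.map_sComp_apply {cc : CartesianClosed V} (D : NFunctor V cc S) {J K L : NSort S}
    (f : SHom V (toSObj V J) (toSObj V K)) (g : SHom V (toSObj V K) (toSObj V L)) (s : S)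
    (d : (D.obj J s).1) : (D.map (sComp f g) s).1 d = (D.map g s).1 ((D.map f s).1 d) :=
  SHom.congr_apply (D.map_comp f g) s d

theorem NFunctor.map_sId_apply {cc : CartesianClosed V} (D : NFunctor V cc S) (J : NSort S)
    (s : S) (d : (D.obj J s).1) : (D.map (sId V (toSObj V J)) s).1 d = d :=
  SHom.congr_apply (D.map_id J) s d

end SortedHoms

section Copowers

variable {V : TopConstruct.{u}} {S : Type u}

theorem adm_copow_insert {W : Type u} (w : V.Str W) (n : ℕ) (i : Fin n) :
    V.Adm w (copow V n).2 fun _ => ULift.up i :=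
  (V.fLift_adm _ _ _ (ULift.up i)).comp (adm_indisc w fun _ => PUnit.unit)

theorem adm_copow_of {n : ℕ} {B : Type u} {t : V.Str B} {f : ULift.{u} (Fin n) → B}
    (h : ∀ i : Fin n, V.Adm (V.indisc PUnit.{u + 1}) t fun _ => f (ULift.up i)) :
    V.Adm (copow V n).2 t f :=
  V.fLift_final _ _ _ t f fun i => h i.down

/-- Products with `n · 1` are computed pointwise because `- × w` is a left adjoint. -/
theorem adm_prodStr_copow (cc : CartesianClosed V) {W B : Type u} {w : V.Str W} {t : V.Str B}
    {n : ℕ} {F : W × ULift.{u} (Fin n) → B} (hF : ∀ i : Fin n, V.Adm w t fun x => F (x, ⟨i⟩)) :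
    V.Adm (V.prodStr w (copow V n).2) t F := by
  have hcurry : V.Adm (copow V n).2 (cc.exp w t)
      fun j => (⟨fun x => F (x, j), hF j.down⟩ : {f : W → B // V.Adm w t f}) :=
    adm_copow_of fun i => (cc.adm_curry_iff _ _ _ _).mpr ((hF i).comp (adm_snd _ _))
  exact ((cc.adm_curry_iff _ _ _ _).mp hcurry).comp ((adm_snd _ _).prodMk (adm_fst _ _))

theorem adm_sHomStr_toSObj_eval (cc : CartesianClosed V) (J : NSort S) (Z : S → V.Obj) (s : S)
    (i : Fin (J.1 s)) :
    V.Adm (sHomStr V cc (toSObj V J) Z) (Z s).2 fun g => (g s).1 ⟨i⟩ :=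
  (adm_piStrU_apply _ s).eval (adm_copow_insert _ _ i)

theorem adm_to_sHomStr_toSObj (cc : CartesianClosed V) {J : NSort S} {Z : S → V.Obj}
    {W : Type u} {w : V.Str W} {F : W → SHom V (toSObj V J) Z}
    (h : ∀ s (i : Fin (J.1 s)), V.Adm w (Z s).2 fun x => (F x s).1 ⟨i⟩) :
    V.Adm w (sHomStr V cc (toSObj V J) Z) F :=
  adm_piStrU fun s => (cc.adm_curry_iff _ _ _ _).mpr (adm_prodStr_copow cc (h s))

end Copowers

section Arities

variable {V : TopConstruct.{u}} {S : Type u}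

def NSort.zero (S : Type u) : NSort S :=
  ⟨fun _ => 0, by simp⟩

def NSort.add (K L : NSort S) : NSort S :=
  ⟨fun s => K.1 s + L.1 s, (K.2.union L.2).subset fun s hs => by
    simp only [Set.mem_union, Set.mem_ofPred_eq] at hs ⊢
    omega⟩

variable (V) in
def sHomZero (Z : S → V.Obj) : SHom V (toSObj V (NSort.zero S)) Z :=
  fun _ => ⟨fun j => j.down.elim0, adm_copow_of fun i => i.elim0⟩

theorem sHom_zero_ext {Z : S → V.Obj} (f g : SHom V (toSObj V (NSort.zero S)) Z) : f = g :=
  SHom.ext fun _ j => j.down.elim0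

variable (V) in
def sInl (K L : NSort S) : SHom V (toSObj V K) (toSObj V (K.add L)) :=
  fun s => ⟨fun j => ⟨Fin.castAdd (L.1 s) j.down⟩, adm_copow_of fun _ => adm_copow_insert _ _ _⟩

variable (V) in
def sInr (K L : NSort S) : SHom V (toSObj V L) (toSObj V (K.add L)) :=
  fun s => ⟨fun j => ⟨Fin.natAdd (K.1 s) j.down⟩, adm_copow_of fun _ => adm_copow_insert _ _ _⟩

def sCopair {K L : NSort S} {Z : S → V.Obj} (w : SHom V (toSObj V K) Z)
    (w' : SHom V (toSObj V L) Z) : SHom V (toSObj V (K.add L)) Z :=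
  fun s => ⟨fun j => Fin.addCases (motive := fun _ => (Z s).1) (fun a => (w s).1 ⟨a⟩)
      (fun a => (w' s).1 ⟨a⟩) j.down,
    adm_copow_of fun i => by
      induction i using Fin.addCases with
      | left a => simpa using (w s).2.comp (adm_copow_insert _ _ a)
      | right a => simpa using (w' s).2.comp (adm_copow_insert _ _ a)⟩

variable {K L : NSort S} {Z : S → V.Obj} (w : SHom V (toSObj V K) Z)
  (w' : SHom V (toSObj V L) Z)

theorem sCopair_apply_castAdd (s : S) (a : Fin (K.1 s)) :
    (sCopair w w' s).1 ⟨Fin.castAdd (L.1 s) a⟩ = (w s).1 ⟨a⟩ := by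
  simp [sCopair]

theorem sCopair_apply_natAdd (s : S) (a : Fin (L.1 s)) :
    (sCopair w w' s).1 ⟨Fin.natAdd (K.1 s) a⟩ = (w' s).1 ⟨a⟩ := by
  simp [sCopair]

theorem sInl_sCopair : sComp (sInl V K L) (sCopair w w') = w :=
  SHom.ext fun s ⟨a⟩ => sCopair_apply_castAdd w w' s a

theorem sInr_sCopair : sComp (sInr V K L) (sCopair w w') = w' :=
  SHom.ext fun s ⟨a⟩ => sCopair_apply_natAdd w w' s a

theorem sCopair_sComp {Z' : S → V.Obj} (g : SHom V Z Z') :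
    sComp (sCopair w w') g = sCopair (sComp w g) (sComp w' g) :=
  SHom.ext fun s ⟨j⟩ => by
    induction j using Fin.addCases with
    | left a =>
      show (g s).1 ((sCopair w w' s).1 _) = _
      rw [sCopair_apply_castAdd, sCopair_apply_castAdd]
      rfl
    | right a =>
      show (g s).1 ((sCopair w w' s).1 _) = _
      rw [sCopair_apply_natAdd, sCopair_apply_natAdd]
      rfl

theorem adm_sCopair (cc : CartesianClosed V) (K L : NSort S) (Z : S → V.Obj) :
    V.Adm (V.prodStr (sHomStr V cc (toSObj V K) Z) (sHomStr V cc (toSObj V L) Z))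
      (sHomStr V cc (toSObj V (K.add L)) Z) fun p => sCopair p.1 p.2 :=
  adm_to_sHomStr_toSObj cc fun s i => by
    induction i using Fin.addCases with
    | left a => simpa [sCopair] using (adm_sHomStr_toSObj_eval cc K Z s a).comp (adm_fst _ _)
    | right a => simpa [sCopair] using (adm_sHomStr_toSObj_eval cc L Z s a).comp (adm_snd _ _)

end Arities

section AtSort

variable {V : TopConstruct.{u}} {S : Type u}

variable (V) in
/-- The right adjoint of evaluation at `s₀`: `A` at the sort `s₀`, a point at every other sort. -/
def atSort (A : V.Obj) (s₀ : S) : S → V.Obj := fun s =>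
  ⟨s = s₀ → A.1,
    V.iLift (I := ULift.{u + 1} (PLift (s = s₀))) (fun _ => A.1) (fun _ => A.2)
      fun h g => g h.down.down⟩

theorem adm_atSort_self (A : V.Obj) (s₀ : S) : V.Adm (atSort V A s₀ s₀).2 A.2 fun g => g rfl :=
  V.iLift_adm _ _ _ ⟨⟨rfl⟩⟩

theorem adm_to_atSort {A : V.Obj} {s₀ s : S} {W : Type u} {w : V.Str W}
    {f : W → s = s₀ → A.1} (h : ∀ hs : s = s₀, V.Adm w A.2 fun x => f x hs) :
    V.Adm w (atSort V A s₀ s).2 f :=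
  V.iLift_initial _ _ _ _ _ fun i => h i.down.down

def SHom.toAtSort {F : S → V.Obj} {A : V.Obj} {s₀ : S} (φ : VHomSet V (F s₀) A) :
    SHom V F (atSort V A s₀) :=
  fun _ => ⟨fun d hs => φ.1 (hs ▸ d), adm_to_atSort fun hs => by subst hs; exact φ.2⟩

theorem adm_toAtSort (cc : CartesianClosed V) {F : S → V.Obj} {A : V.Obj} {s₀ : S} {W : Type u}
    {w : V.Str W} {φ : W → VHomSet V (F s₀) A} (hφ : V.Adm w (vHomStr V cc (F s₀) A) φ) :
    V.Adm w (sHomStr V cc F (atSort V A s₀)) fun x => SHom.toAtSort (φ x) :=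
  adm_piStrU fun _ => (cc.adm_curry_iff _ _ _ _).mpr <| adm_to_atSort fun hs => by
    subst hs
    exact (hφ.comp (adm_fst _ _)).eval (adm_snd _ _)

end AtSort

section Colimit

variable {V : TopConstruct.{u}} {cc : CartesianClosed V} {S : Type u} {D : NFunctor V cc S}
  {X C : S → V.Obj} (c : Cyl V cc D X C)

theorem Cyl.lam_sComp_apply {J K : NSort S} (f : SHom V (toSObj V J) (toSObj V K))
    (w : SHom V (toSObj V K) X) (s : S) (d : (D.obj J s).1) :
    (c.lam J (sComp f w) s).1 d = (c.lam K w s).1 ((D.map f s).1 d) :=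
  SHom.congr_apply (c.natural J K f w) s d

/-- Test the colimit against the indiscrete object of truth values. -/
theorem exists_lam_apply_eq (hc : IsWColim c) (s : S) (x : (C s).1) :
    ∃ (K : NSort S) (w : SHom V (toSObj V K) X) (d : (D.obj K s).1), (c.lam K w s).1 d = x := by
  let Z : S → V.Obj := fun _ => ⟨ULift.{u} Prop, V.indisc _⟩
  let inImage : SHom V C Z := fun s =>
    ⟨fun x => ⟨∃ K w d, (c.lam K w s).1 d = x⟩, adm_indisc _ _⟩
  let always : SHom V C Z := fun _ => ⟨fun _ => ⟨True⟩, adm_indisc _ _⟩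
  have h : inImage = always := (hc Z).1 _ _ fun K w => SHom.ext fun s d =>
    congrArg ULift.up (eq_true ⟨K, w, d, rfl⟩)
  exact of_eq_true (congrArg ULift.down (SHom.congr_apply h s x))

theorem exists_lam_forall_apply_eq (hc : IsWColim c) {ι : Type u} [Finite ι] (τ : ι → S)
    (t : ∀ i, (C (τ i)).1) :
    ∃ (K : NSort S) (w : SHom V (toSObj V K) X) (t' : ∀ i, (D.obj K (τ i)).1),
      ∀ i, (c.lam K w (τ i)).1 (t' i) = t i := by
  classical
  have : Fintype ι := Fintype.ofFinite ι
  suffices h : ∀ F : Finset ι, ∃ (K : NSort S) (w : SHom V (toSObj V K) X),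
      ∀ i ∈ F, ∃ d, (c.lam K w (τ i)).1 d = t i by
    obtain ⟨K, w, hK⟩ := h Finset.univ
    choose t' ht' using fun i => hK i (Finset.mem_univ i)
    exact ⟨K, w, t', ht'⟩
  intro F
  induction F using Finset.induction_on with
  | empty => exact ⟨NSort.zero S, sHomZero V X, by simp⟩
  | insert i F _ ih =>
    obtain ⟨K, w, hK⟩ := ih
    obtain ⟨L, v, d, hd⟩ := exists_lam_apply_eq c hc (τ i) (t i)
    refine ⟨L.add K, sCopair v w, fun j hj => ?_⟩
    rcases Finset.mem_insert.mp hj with rfl | hj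
    · refine ⟨(D.map (sInl V L K) _).1 d, ?_⟩
      rw [← c.lam_sComp_apply, sInl_sCopair, hd]
    · obtain ⟨d', hd'⟩ := hK j hj
      refine ⟨(D.map (sInr V L K) _).1 d', ?_⟩
      rw [← c.lam_sComp_apply, sInr_sCopair, hd']

theorem funext_lam (hc : IsWColim c) {ι : Type u} [Finite ι] {τ : ι → S} {P Y : Type*}
    {g g' : P × (∀ i, (C (τ i)).1) → Y}
    (h : ∀ (K : NSort S) (w : SHom V (toSObj V K) X) (x : P) (t : ∀ i, (D.obj K (τ i)).1),
      g (x, fun i => (c.lam K w (τ i)).1 (t i)) = g' (x, fun i => (c.lam K w (τ i)).1 (t i))) :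
    g = g' := by
  funext ⟨x, t⟩
  obtain ⟨K, w, t', ht'⟩ := exists_lam_forall_apply_eq c hc τ t
  simpa only [ht'] using h K w x t'

end Colimit

section Descent

variable {V : TopConstruct.{u}} {cc : CartesianClosed V} {S : Type u} {D : NFunctor V cc S}
  {X C : S → V.Obj} (c : Cyl V cc D X C)

/-- Transposing along `P × - ⊣ [P, -]` and along evaluation at `s₀` ⊣ `atSort`, a map
`P × C(s₀) → Y` is a map `C → atSort [P, Y] s₀`, to which the universal property of `C` applies. -/
theorem exists_desc_sort (hrep : V.PointRepresents) (hc : IsWColim c) {P : Type u}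
    (p : V.Str P) (Y : V.Obj) (s₀ : S)
    (g : ∀ K : NSort S, SHom V (toSObj V K) X → P × (D.obj K s₀).1 → Y.1)
    (hadm : ∀ K, V.Adm (V.prodStr (sHomStr V cc (toSObj V K) X) (V.prodStr p (D.obj K s₀).2))
      Y.2 fun q => g K q.1 q.2)
    (hnat : ∀ (J K : NSort S) (f : SHom V (toSObj V J) (toSObj V K)) w x d,
      g J (sComp f w) (x, d) = g K w (x, (D.map f s₀).1 d)) :
    ∃ h : P × (C s₀).1 → Y.1, V.Adm (V.prodStr p (C s₀).2) Y.2 h ∧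
      ∀ K w x d, h (x, (c.lam K w s₀).1 d) = g K w (x, d) := by
  let A : V.Obj := ⟨{f : P → Y.1 // V.Adm p Y.2 f}, cc.exp p Y.2⟩
  have hswap : ∀ K, V.Adm (V.prodStr (V.prodStr (sHomStr V cc (toSObj V K) X) (D.obj K s₀).2) p)
      Y.2 fun q => g K q.1.1 (q.2, q.1.2) := fun K =>
    (hadm K).comp (((adm_fst _ _).comp (adm_fst _ _)).prodMk
      ((adm_snd _ _).prodMk ((adm_snd _ _).comp (adm_fst _ _))))
  let φ K : SHom V (toSObj V K) X → VHomSet V (D.obj K s₀) A :=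
    curryHom hrep (adm_curryHom cc hrep (hswap K))
  let γ : NatCar V cc D X (atSort V A s₀) :=
    ⟨fun K => ⟨fun w => SHom.toAtSort (φ K w), adm_toAtSort cc (adm_curryHom cc hrep _)⟩,
      fun J K f w => SHom.ext fun s d => funext fun hs => by
        subst hs
        exact Subtype.ext (funext fun x => hnat J K f w x d)⟩
  obtain ⟨e, he⟩ := (hc (atSort V A s₀)).2.1 γ
  refine ⟨fun q => ((e s₀).1 q.2 rfl).1 q.1, ?_, fun K w x d => ?_⟩
  · exact ((adm_atSort_self A s₀).comp ((e s₀).2.comp (adm_snd _ _))).eval (adm_fst _ _)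
  · exact congrArg (fun a => (a rfl).1 x) (SHom.congr_apply (he K w) s₀ d)

end Descent

theorem Equiv.piSplitAt_symm_map {ι : Type*} [DecidableEq ι] {T T' : ι → Type*}
    (F : ∀ i, T i → T' i) (i₀ : ι) (a : T i₀) (r : ∀ j : {j // j ≠ i₀}, T j) :
    (fun i => F i ((Equiv.piSplitAt i₀ T).symm (a, r) i)) =
      (Equiv.piSplitAt i₀ T').symm (F i₀ a, fun j => F j (r j)) := by
  funext i
  by_cases h : i = i₀
  · subst h
    simp
  · simp [h]

section PiDescent

variable {V : TopConstruct.{u}} {cc : CartesianClosed V} {S : Type u} {D : NFunctor V cc S}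
  {X C : S → V.Obj} {ι : Type u} {τ : ι → S} {P : Type u} {p : V.Str P} {Y : V.Obj}
  {β : ∀ K : NSort S, SHom V (toSObj V K) X → P × (∀ i, (D.obj K (τ i)).1) → Y.1}

variable (D X τ p Y β) in
structure IsCompatible : Prop where
  adm : ∀ K, V.Adm (V.prodStr (sHomStr V cc (toSObj V K) X)
    (V.prodStr p (V.piStrU fun i => (D.obj K (τ i)).2))) Y.2 fun q => β K q.1 q.2
  natural : ∀ (J K : NSort S) (f : SHom V (toSObj V J) (toSObj V K)) w x t,
    β J (sComp f w) (x, t) = β K w (x, fun i => (D.map f (τ i)).1 (t i))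

variable (τ) in
def PiDescends (c : Cyl V cc D X C) : Prop :=
  ∀ ⦃P : Type u⦄ (p : V.Str P) (Y : V.Obj) β, IsCompatible D X τ p Y β →
    ∃ h : P × (∀ i, (C (τ i)).1) → Y.1,
      V.Adm (V.prodStr p (V.piStrU fun i => (C (τ i)).2)) Y.2 h ∧
      ∀ K w x t, h (x, fun i => (c.lam K w (τ i)).1 (t i)) = β K w (x, t)

theorem piDescends_of_isEmpty (c : Cyl V cc D X C) (hrep : V.PointRepresents) [IsEmpty ι] :
    PiDescends τ c := by
  intro P p Y β hβ
  refine ⟨fun q => β (NSort.zero S) (sHomZero V X) (q.1, isEmptyElim), ?_, fun K w x t => ?_⟩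
  · exact (hβ.adm _).comp ((adm_const hrep _ _ _).prodMk
      ((adm_fst _ _).prodMk (adm_piStrU isEmptyElim)))
  · dsimp only
    rw [sHom_zero_ext (sHomZero V X) (sComp (sHomZero V (toSObj V K)) w), hβ.natural]
    exact congrArg (fun t => β K w (x, t)) (funext isEmptyElim)

section Split

variable [DecidableEq ι] (i₀ : ι)

variable (D β) in
/-- The coordinate `i₀` at stage `K` and the others at stage `K'`, both pushed to stage `K + K'`. -/
def splitFamily (K K' : NSort S) (w' : SHom V (toSObj V K') X)
    (q : ((P × SHom V (toSObj V K) X) × (D.obj K (τ i₀)).1) ×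
      (∀ j : {j // j ≠ i₀}, (D.obj K' (τ j)).1)) : Y.1 :=
  β (K.add K') (sCopair q.1.1.2 w') (q.1.1.1, (Equiv.piSplitAt i₀ _).symm
    ((D.map (sInl V K K') _).1 q.1.2, fun j => (D.map (sInr V K K') _).1 (q.2 j)))

theorem IsCompatible.apply_sComp_sCopair (hβ : IsCompatible D X τ p Y β) {K K' L : NSort S}
    (m : SHom V (toSObj V (K.add K')) (toSObj V L)) (u : SHom V (toSObj V L) X) (x : P)
    (d : (D.obj K (τ i₀)).1) (t : ∀ j : {j // j ≠ i₀}, (D.obj K' (τ j)).1) :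
    β (K.add K') (sComp m u) (x, (Equiv.piSplitAt i₀ _).symm
      ((D.map (sInl V K K') _).1 d, fun j => (D.map (sInr V K K') _).1 (t j))) =
    β L u (x, (Equiv.piSplitAt i₀ _).symm
      ((D.map (sComp (sInl V K K') m) _).1 d,
        fun j => (D.map (sComp (sInr V K K') m) _).1 (t j))) := by
  rw [hβ.natural, Equiv.piSplitAt_symm_map (fun i => (D.map m (τ i)).1)]
  simp only [D.map_sComp_apply]

theorem adm_splitFamily (hβ : IsCompatible D X τ p Y β) (K K' : NSort S) :
    V.Adm (V.prodStr (sHomStr V cc (toSObj V K') X)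
        (V.prodStr (V.prodStr (V.prodStr p (sHomStr V cc (toSObj V K) X)) (D.obj K (τ i₀)).2)
          (V.piStrU fun j : {j // j ≠ i₀} => (D.obj K' (τ j)).2)))
      Y.2 fun q => splitFamily D β i₀ K K' q.1 q.2 := by
  have hq := adm_snd (sHomStr V cc (toSObj V K') X)
    (V.prodStr (V.prodStr (V.prodStr p (sHomStr V cc (toSObj V K) X)) (D.obj K (τ i₀)).2)
      (V.piStrU fun j : {j // j ≠ i₀} => (D.obj K' (τ j)).2))
  have hxw := (adm_fst _ _).comp ((adm_fst _ _).comp hq)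
  have hd := (D.map (sInl V K K') (τ i₀)).2.comp ((adm_snd _ _).comp ((adm_fst _ _).comp hq))
  have ht := adm_piStrU (t := fun j : {j // j ≠ i₀} => (D.obj (K.add K') (τ j)).2) fun j =>
    (D.map (sInr V K K') (τ j)).2.comp ((adm_piStrU_apply _ j).comp ((adm_snd _ _).comp hq))
  have hcop := (adm_sCopair cc K K' X).comp (((adm_snd _ _).comp hxw).prodMk (adm_fst _ _))
  exact (hβ.adm _).comp (hcop.prodMk
    (((adm_fst _ _).comp hxw).prodMk ((adm_piSplitAt_symm _ i₀).comp (hd.prodMk ht))))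

theorem IsCompatible.splitFamily (hβ : IsCompatible D X τ p Y β) (K : NSort S) :
    IsCompatible D X (fun j : {j // j ≠ i₀} => τ j)
      (V.prodStr (V.prodStr p (sHomStr V cc (toSObj V K) X)) (D.obj K (τ i₀)).2) Y
      (splitFamily D β i₀ K) where
  adm := adm_splitFamily i₀ hβ K
  natural J' K' f' w' q t := by
    have hcop : sCopair q.1.2 (sComp f' w') =
        sComp (sCopair (sInl V K K') (sComp f' (sInr V K K'))) (sCopair q.1.2 w') := by
      rw [sCopair_sComp, sInl_sCopair, sComp_assoc, sInr_sCopair]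
    simp only [_root_.splitFamily]
    rw [hcop, hβ.apply_sComp_sCopair, sInl_sCopair, sInr_sCopair]
    simp only [D.map_sComp_apply]

theorem splitFamily_sComp (hβ : IsCompatible D X τ p Y β) {J K K' : NSort S}
    (f : SHom V (toSObj V J) (toSObj V K)) (w : SHom V (toSObj V K) X)
    (w' : SHom V (toSObj V K') X) (x : P) (d : (D.obj J (τ i₀)).1)
    (t : ∀ j : {j // j ≠ i₀}, (D.obj K' (τ j)).1) :
    splitFamily D β i₀ J K' w' (((x, sComp f w), d), t) =
      splitFamily D β i₀ K K' w' (((x, w), (D.map f _).1 d), t) := by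
  have hcop : sCopair (sComp f w) w' =
      sComp (sCopair (sComp f (sInl V K K')) (sInr V K K')) (sCopair w w') := by
    rw [sCopair_sComp, sComp_assoc, sInl_sCopair, sInr_sCopair]
  simp only [splitFamily]
  rw [hcop, hβ.apply_sComp_sCopair, sInl_sCopair, sInr_sCopair]
  simp only [D.map_sComp_apply]

theorem splitFamily_self (hβ : IsCompatible D X τ p Y β) {K : NSort S}
    (w : SHom V (toSObj V K) X) (x : P) (d : (D.obj K (τ i₀)).1)
    (t : ∀ j : {j // j ≠ i₀}, (D.obj K (τ j)).1) :
    splitFamily D β i₀ K K w (((x, w), d), t) = β K w (x, (Equiv.piSplitAt i₀ _).symm (d, t)) := by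
  have hcop : sCopair w w = sComp (sCopair (sId V (toSObj V K)) (sId V (toSObj V K))) w := by
    rw [sCopair_sComp, sId_sComp]
  simp only [splitFamily]
  rw [hcop, hβ.apply_sComp_sCopair, sInl_sCopair, sInr_sCopair]
  simp only [D.map_sId_apply]

end Split

/-- Descend first in the coordinates `j ≠ i₀`, with the coordinate `i₀` and its stage moved into
the parameter, then in the coordinate `i₀` by `exists_desc_sort`. -/
theorem PiDescends.of_subtype_ne (c : Cyl V cc D X C) (hrep : V.PointRepresents)
    (hc : IsWColim c) [DecidableEq ι] [Finite ι] (i₀ : ι)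
    (h : PiDescends (fun j : {j // j ≠ i₀} => τ j) c) : PiDescends τ c := by
  intro P p Y β hβ
  choose g hgadm hg using fun K => h _ Y _ (hβ.splitFamily i₀ K)
  have hadm : ∀ K, V.Adm (V.prodStr (sHomStr V cc (toSObj V K) X)
      (V.prodStr (V.prodStr p (V.piStrU fun j : {j // j ≠ i₀} => (C (τ j)).2))
        (D.obj K (τ i₀)).2)) Y.2 fun q => g K (((q.2.1.1, q.1), q.2.2), q.2.1.2) := fun K => by
    have hq := adm_snd (sHomStr V cc (toSObj V K) X)
      (V.prodStr (V.prodStr p (V.piStrU fun j : {j // j ≠ i₀} => (C (τ j)).2))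
        (D.obj K (τ i₀)).2)
    exact (hgadm K).comp (((((adm_fst _ _).comp ((adm_fst _ _).comp hq)).prodMk
      (adm_fst _ _)).prodMk ((adm_snd _ _).comp hq)).prodMk
        ((adm_snd _ _).comp ((adm_fst _ _).comp hq)))
  have hnat : ∀ (J K : NSort S) (f : SHom V (toSObj V J) (toSObj V K)) w
      (y : P × ∀ j : {j // j ≠ i₀}, (C (τ j)).1) d,
      g J (((y.1, sComp f w), d), y.2) = g K (((y.1, w), (D.map f (τ i₀)).1 d), y.2) :=
    fun J K f w y d => congrFun (funext_lam c hc
      (g := fun y => g J (((y.1, sComp f w), d), y.2))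
      (g' := fun y => g K (((y.1, w), (D.map f (τ i₀)).1 d), y.2))
      fun K' w' x t => (hg J K' w' _ t).trans
        ((splitFamily_sComp i₀ hβ f w w' x d t).trans (hg K K' w' _ t).symm)) y
  obtain ⟨e, headm, he⟩ := exists_desc_sort c hrep hc _ Y (τ i₀)
    (fun K w (q : (P × ∀ j : {j // j ≠ i₀}, (C (τ j)).1) × (D.obj K (τ i₀)).1) =>
      g K (((q.1.1, w), q.2), q.1.2)) hadm hnat
  refine ⟨fun q => e ((q.1, fun j => q.2 j), q.2 i₀), ?_, fun K w x t => ?_⟩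
  · have hq := adm_snd p (V.piStrU fun i => (C (τ i)).2)
    have htail := adm_piStrU fun j : {j // j ≠ i₀} => (adm_piStrU_apply _ (j : ι)).comp hq
    exact headm.comp (((adm_fst _ _).prodMk htail).prodMk ((adm_piStrU_apply _ i₀).comp hq))
  · refine (he K w _ (t i₀)).trans ((hg K K w _ fun j => t j).trans ?_)
    rw [splitFamily_self i₀ hβ]
    exact congrArg (fun t => β K w (x, t)) ((Equiv.piSplitAt i₀ _).symm_apply_apply t)

theorem piDescends (c : Cyl V cc D X C) (hrep : V.PointRepresents) (hc : IsWColim c)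
    [Finite ι] (τ : ι → S) : PiDescends τ c := by
  classical
  induction h : Nat.card ι generalizing ι with
  | zero =>
    have := Finite.card_eq_zero_iff.mp h
    exact piDescends_of_isEmpty (τ := τ) c hrep
  | succ n ih =>
    obtain ⟨i₀⟩ := Finite.card_pos_iff.mp (by rw [h]; exact n.succ_pos)
    refine PiDescends.of_subtype_ne c hrep hc i₀ (ih _ ?_)
    have := Fintype.ofFinite ι
    simp only [Nat.card_eq_fintype_card, Fintype.card_subtype_compl, Fintype.card_unique] at h ⊢
    omega

end PiDescent

section Representable

variable {V : TopConstruct.{u}} {cc : CartesianClosed V} {S : Type u} {D : NFunctor V cc S}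
  {X C : S → V.Obj}

abbrev NSort.Elem (J : NSort S) : Type u := Σ s, ULift.{u} (Fin (J.1 s))

instance NSort.finite_elem (J : NSort S) : Finite J.Elem := by
  have := J.2.to_subtype
  refine Finite.of_injective (β := Σ s : {s | J.1 s ≠ 0}, ULift.{u} (Fin (J.1 s)))
    (fun p => ⟨⟨p.1, p.2.down.pos.ne'⟩, p.2⟩) ?_
  rintro ⟨s, a⟩ ⟨s', a'⟩ h
  simp only [Sigma.mk.injEq, Subtype.mk.injEq] at h
  obtain ⟨rfl, h⟩ := h
  rw [eq_of_heq h]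

def SHom.toPi {J : NSort S} {Z : S → V.Obj} (v : SHom V (toSObj V J) Z) :
    ∀ p : J.Elem, (Z p.1).1 :=
  fun p => (v p.1).1 p.2

def SHom.ofPi (hrep : V.PointRepresents) {J : NSort S} {Z : S → V.Obj}
    (t : ∀ p : J.Elem, (Z p.1).1) : SHom V (toSObj V J) Z :=
  fun s => ⟨fun j => t ⟨s, j⟩, adm_copow_of fun _ => hrep _ _⟩

theorem adm_toPi (cc : CartesianClosed V) (J : NSort S) (Z : S → V.Obj) :
    V.Adm (sHomStr V cc (toSObj V J) Z) (V.piStrU fun p : J.Elem => (Z p.1).2) SHom.toPi :=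
  adm_piStrU fun p => adm_sHomStr_toSObj_eval cc J Z p.1 p.2.down

theorem adm_ofPi (cc : CartesianClosed V) (hrep : V.PointRepresents) (J : NSort S)
    (Z : S → V.Obj) :
    V.Adm (V.piStrU fun p : J.Elem => (Z p.1).2) (sHomStr V cc (toSObj V J) Z) (SHom.ofPi hrep) :=
  adm_to_sHomStr_toSObj cc fun s i => adm_piStrU_apply _ (⟨s, ⟨i⟩⟩ : J.Elem)

variable (c : Cyl V cc D X C) {J : NSort S}

theorem exists_sComp_lam_eq (hrep : V.PointRepresents) (hc : IsWColim c)
    (v : SHom V (toSObj V J) C) :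
    ∃ (K : NSort S) (w : SHom V (toSObj V K) X) (u : SHom V (toSObj V J) (D.obj K)),
      sComp u (c.lam K w) = v := by
  obtain ⟨K, w, t, ht⟩ := exists_lam_forall_apply_eq c hc Sigma.fst v.toPi
  exact ⟨K, w, SHom.ofPi hrep t, SHom.ext fun s j => ht ⟨s, j⟩⟩

theorem exists_desc_sHom (hrep : V.PointRepresents) (hc : IsWColim c) {P : Type u} (p : V.Str P)
    (Y : V.Obj)
    (β : ∀ K : NSort S, SHom V (toSObj V K) X → P × SHom V (toSObj V J) (D.obj K) → Y.1)
    (hadm : ∀ K, V.Adm (V.prodStr (sHomStr V cc (toSObj V K) X)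
      (V.prodStr p (sHomStr V cc (toSObj V J) (D.obj K)))) Y.2 fun q => β K q.1 q.2)
    (hnat : ∀ (J' K : NSort S) (f : SHom V (toSObj V J') (toSObj V K)) w x u,
      β J' (sComp f w) (x, u) = β K w (x, sComp u (D.map f))) :
    ∃ h : P × SHom V (toSObj V J) C → Y.1,
      V.Adm (V.prodStr p (sHomStr V cc (toSObj V J) C)) Y.2 h ∧
      ∀ K w x u, h (x, sComp u (c.lam K w)) = β K w (x, u) := by
  have hβ : IsCompatible D X (Sigma.fst : J.Elem → S) p Y
      fun K w q => β K w (q.1, SHom.ofPi hrep q.2) :=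
    { adm := fun K => (hadm K).comp ((adm_fst _ _).prodMk (((adm_fst _ _).comp (adm_snd _ _)).prodMk
        ((adm_ofPi cc hrep J _).comp ((adm_snd _ _).comp (adm_snd _ _)))))
      natural := fun J' K f w x t => hnat J' K f w x _ }
  obtain ⟨h, hadm', hh⟩ := piDescends c hrep hc Sigma.fst p Y _ hβ
  exact ⟨fun q => h (q.1, q.2.toPi),
    hadm'.comp ((adm_fst _ _).prodMk ((adm_toPi cc J C).comp (adm_snd _ _))),
    fun K w x u => hh K w x u.toPi⟩

end Representable

section Comparison

variable {V : TopConstruct.{u}} {cc : CartesianClosed V} {S : Type u} {D : NFunctor V cc S}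
  {X C : S → V.Obj}

theorem adm_natCarV_apply (J₀ : NSort S) (Y : V.Obj) (K : NSort S) :
    V.Adm (V.prodStr (sHomStr V cc (toSObj V K) X)
        (V.prodStr (natStrV V cc D X J₀ Y) (sHomStr V cc (toSObj V J₀) (D.obj K))))
      Y.2 fun q => ((q.2.1.1 K).1 q.1).1 q.2.2 := by
  have hα : V.Adm (natStrV V cc D X J₀ Y)
      (cc.exp (sHomStr V cc (toSObj V K) X) (vHomStr V cc (TObj V cc J₀ (D.obj K)) Y))
      fun α => α.1 K :=
    (adm_piStrU_apply _ K).comp (adm_iLift1 _ _)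
  exact ((hα.comp ((adm_fst _ _).comp (adm_snd _ _))).eval (adm_fst _ _)).eval
    ((adm_snd _ _).comp (adm_snd _ _))

theorem adm_comparison (c : Cyl V cc D X C) (J₀ : NSort S) (Y : V.Obj)
    (Φ : VHomSet V (TObj V cc J₀ C) Y → NatCarV V cc D X J₀ Y)
    (hΦ : ∀ h K w u, (((Φ h).1 K).1 w).1 u = h.1 (sComp u (c.lam K w))) :
    V.Adm (vHomStr V cc (TObj V cc J₀ C) Y) (natStrV V cc D X J₀ Y) Φ := by
  refine adm_iLift1_of (adm_piStrU fun K => (cc.adm_curry_iff _ _ _ _).mpr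
    ((cc.adm_curry_iff _ _ _ _).mpr ?_))
  have hq := adm_fst (V.prodStr (vHomStr V cc (TObj V cc J₀ C) Y) (sHomStr V cc (toSObj V K) X))
    (sHomStr V cc (toSObj V J₀) (D.obj K))
  have hlam := (adm_sComp cc _ _ _).comp
    ((adm_snd _ _).prodMk ((c.adm K).comp ((adm_snd _ _).comp hq)))
  have heval := ((adm_fst _ _).comp hq).eval hlam
  simp only [hΦ]
  exact heval

end Comparison

/-- Suppose `𝒱` is a topological category over `Set` whose
symmetric monoidal structure is the cartesian one, `𝒱` is cartesian closed, and
the topological functor `|-| : 𝒱 → Set` is represented by the terminal object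
`1`.  Then the small subcategory of arities `𝕟_𝒮 ↪ 𝒱^𝒮` is *eleutheric*: for
every object `J₀` of `𝕟_𝒮`, the representable `𝒱`-functor
`𝒱^𝒮(J₀, −) : 𝒱^𝒮 → 𝒱` preserves colimits weighted by the weights
`𝒱^𝒮(j−, X)` for all `X ∈ 𝒱^𝒮`: whenever a cylinder exhibits `C` as
`𝒱^𝒮(j−, X) ∗ D` in `𝒱^𝒮`, its image under `𝒱^𝒮(J₀, −)` exhibits `𝒱^𝒮(J₀, C)`
as `𝒱^𝒮(j−, X) ∗ (𝒱^𝒮(J₀, D−))` in `𝒱`. -/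
theorem statement19 (V : TopConstruct.{u}) (cc : CartesianClosed V)
    -- `|-|` is represented by the terminal object `1` (the indiscrete singleton):
    (hrep : ∀ {X : Type u} (s : V.Str X) (x : X),
      V.Adm (V.indisc PUnit.{u + 1}) s fun _ => x)
    (S : Type u) (J₀ : NSort S) (D : NFunctor V cc S) (X : S → V.Obj)
    (C : S → V.Obj) (c : Cyl V cc D X C) (hc : IsWColim c) :
    ∀ Y : V.Obj,
      -- the canonical map `𝒱(𝒱^𝒮(J₀,C), Y) → Nat(𝒱^𝒮(j−,X), 𝒱(𝒱^𝒮(J₀,D−), Y))`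
      -- induced by the image cylinder is injective, ...
      (∀ h h' : VHomSet V (TObj V cc J₀ C) Y,
        (∀ (K : NSort S) (w : SHom V (toSObj V K) X)
          (u : SHom V (toSObj V J₀) (D.obj K)),
          h.1 (sComp u (c.lam K w)) = h'.1 (sComp u (c.lam K w))) → h = h') ∧
      -- ... surjective, ...
      (∀ α : NatCarV V cc D X J₀ Y, ∃ h : VHomSet V (TObj V cc J₀ C) Y,
        ∀ (K : NSort S) (w : SHom V (toSObj V K) X)
          (u : SHom V (toSObj V J₀) (D.obj K)),
          h.1 (sComp u (c.lam K w)) = ((α.1 K).1 w).1 u) ∧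
      -- ... and an isomorphism in `𝒱`: it is admissible ...
      (∀ Φ : VHomSet V (TObj V cc J₀ C) Y → NatCarV V cc D X J₀ Y,
        (∀ h K w u, (((Φ h).1 K).1 w).1 u = h.1 (sComp u (c.lam K w))) →
        V.Adm (vHomStr V cc (TObj V cc J₀ C) Y) (natStrV V cc D X J₀ Y) Φ) ∧
      -- ... with admissible inverse:
      (∀ Ψ : NatCarV V cc D X J₀ Y → VHomSet V (TObj V cc J₀ C) Y,
        (∀ α K w u, (Ψ α).1 (sComp u (c.lam K w)) = ((α.1 K).1 w).1 u) →
        V.Adm (natStrV V cc D X J₀ Y) (vHomStr V cc (TObj V cc J₀ C) Y) Ψ) := by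
  intro Y
  -- with the object of natural transformations as parameter, `H` is the inverse comparison map
  obtain ⟨H, hHadm, hH⟩ := exists_desc_sHom c @hrep hc (natStrV V cc D X J₀ Y) Y
    (fun K w q => ((q.1.1 K).1 w).1 q.2) (adm_natCarV_apply J₀ Y) fun J K f w α u => α.2 J K f w u
  have hfactor := exists_sComp_lam_eq c @hrep hc (J := J₀)
  refine ⟨fun h h' hhh => Subtype.ext (funext fun v => ?_),
    fun α => ⟨⟨fun v => H (α, v), hHadm.comp ((adm_const @hrep _ _ α).prodMk (V.adm_id _))⟩,
      fun K w u => hH K w α u⟩,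
    adm_comparison c J₀ Y, fun Ψ hΨ => (cc.adm_curry_iff _ _ _ _).mpr ?_⟩
  · obtain ⟨K, w, u, rfl⟩ := hfactor v
    exact hhh K w u
  · have hΨH : ∀ α v, (Ψ α).1 v = H (α, v) := fun α v => by
      obtain ⟨K, w, u, rfl⟩ := hfactor v
      exact (hΨ α K w u).trans (hH K w α u).symm
    simp only [hΨH]
    exact hHadm

end Statement19
end
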